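/- Let s be a fixed complex parameter with 12s² ≠ 1, s ≠ 0, and define x(t) = t² and y(t) = 4(144s²t² + 4s² + 32st + 4t² + 1)(4s² + 1)(s+t)s / ((12s² - 1)³ t²) for t ≠ 0. Then, denoting by ẋ and ẏ the derivatives with respect to t, the identity (3xy² - 4xy - y² + y)ẋ² + (-12x²y + 8x² - 2xy + 2x)ẋẏ + (12x³ - x²)ẏ² = 0 holds identically in t (for all t ≠ 0 where all expressions are defined). -/

import Mathlib

/-- The parametrization `x(t) = t²` of the first argument of Horn's `H₅`. -/
noncomputable def xH5 (t : ℂ) : ℂ := t ^ 2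

/-- The parametrization `y(t)` of the second argument of Horn's `H₅`
(for a fixed parameter `s`). -/
noncomputable def yH5 (s t : ℂ) : ℂ :=
  4 * (144 * s ^ 2 * t ^ 2 + 4 * s ^ 2 + 32 * s * t + 4 * t ^ 2 + 1) *
    (4 * s ^ 2 + 1) * (s + t) * s / ((12 * s ^ 2 - 1) ^ 3 * t ^ 2)

theorem hasDerivAt_xH5 (t : ℂ) : HasDerivAt xH5 (2 * t) t := by
  unfold xH5
  simpa using hasDerivAt_pow 2 t

/- `y(t) = k (α t + β + γ / t + δ / t²)` with `k = 4s(4s²+1)/(12s²-1)³`, `α = 144s²+4`,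
`β = 144s³+36s`, `γ = 36s²+1`, `δ = s(4s²+1)`, so `ẏ = k (α t³ - γ t - 2δ) / t³`. -/
theorem hasDerivAt_yH5 {s t : ℂ} (hs : 12 * s ^ 2 ≠ 1) (ht : t ≠ 0) :
    HasDerivAt (yH5 s)
      (4 * (4 * s ^ 2 + 1) * s * ((144 * s ^ 2 + 4) * t ^ 3 - (36 * s ^ 2 + 1) * t
        - 2 * s * (4 * s ^ 2 + 1)) / ((12 * s ^ 2 - 1) ^ 3 * t ^ 3)) t := by
  have hc : (12 * s ^ 2 - 1 : ℂ) ≠ 0 := sub_ne_zero.mpr hs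
  have hsq : HasDerivAt (fun u : ℂ => u ^ 2) (2 * t) t := hasDerivAt_xH5 t
  have hnum : HasDerivAt (fun u : ℂ => 4 * (144 * s ^ 2 * u ^ 2 + 4 * s ^ 2 + 32 * s * u
      + 4 * u ^ 2 + 1) * (4 * s ^ 2 + 1) * (s + u) * s)
      (4 * (4 * s ^ 2 + 1) * s * ((144 * s ^ 2 + 4) * 3 * t ^ 2 + (144 * s ^ 3 + 36 * s) * 2 * t
        + (36 * s ^ 2 + 1))) t :=
    (((((((hsq.const_mul _).add_const _).add ((hasDerivAt_id t).const_mul _)).add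
      (hsq.const_mul 4)).add_const 1).const_mul 4).mul_const _ |>.mul
      ((hasDerivAt_id t).const_add s) |>.mul_const s).congr_deriv
        (by simp only [mul_one, id_eq, Pi.add_apply]; ring)
  refine (hnum.div (hsq.const_mul ((12 * s ^ 2 - 1) ^ 3)) (by simp [hc, ht])).congr_deriv ?_
  field_simp
  ring

theorem hornH5_Fyy_coefficient_vanishes_general (s : ℂ) (hs : 12 * s ^ 2 ≠ 1)
    (t : ℂ) (ht : t ≠ 0) :
    (3 * xH5 t * (yH5 s t) ^ 2 - 4 * xH5 t * yH5 s t - (yH5 s t) ^ 2 + yH5 s t) *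
        (deriv xH5 t) ^ 2
      + (-12 * (xH5 t) ^ 2 * yH5 s t + 8 * (xH5 t) ^ 2 - 2 * xH5 t * yH5 s t
          + 2 * xH5 t) * deriv xH5 t * deriv (yH5 s) t
      + (12 * (xH5 t) ^ 3 - (xH5 t) ^ 2) * (deriv (yH5 s) t) ^ 2 = 0 := by
  rw [(hasDerivAt_xH5 t).deriv, (hasDerivAt_yH5 hs ht).deriv, yH5, xH5]
  have hc : (12 * s ^ 2 - 1 : ℂ) ^ 3 ≠ 0 := pow_ne_zero _ (sub_ne_zero.mpr hs)
  -- `field_simp` only clears the factor `(12s²-1)³` reliably once it is an atom.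
  generalize hC : (12 * s ^ 2 - 1 : ℂ) ^ 3 = c at hc ⊢
  field_simp
  subst hC
  ring

/-- For fixed `s` with `12s² ≠ 1`, `s ≠ 0`, and the curves `x(t) = t²`,
`y(t) = 4(144s²t²+4s²+32st+4t²+1)(4s²+1)(s+t)s/((12s²-1)³t²)`, the numerator of the
coefficient of `F_yy` in the reduction of the `H₅` system vanishes identically:
`(3xy²-4xy-y²+y)ẋ² + (-12x²y+8x²-2xy+2x)ẋẏ + (12x³-x²)ẏ² = 0` for all `t ≠ 0`. -/
theorem hornH5_Fyy_coefficient_vanishes (s : ℂ) (hs : 12 * s ^ 2 ≠ 1) (hs0 : s ≠ 0)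
    (t : ℂ) (ht : t ≠ 0) :
    (3 * xH5 t * (yH5 s t) ^ 2 - 4 * xH5 t * yH5 s t - (yH5 s t) ^ 2 + yH5 s t) *
        (deriv xH5 t) ^ 2
      + (-12 * (xH5 t) ^ 2 * yH5 s t + 8 * (xH5 t) ^ 2 - 2 * xH5 t * yH5 s t
          + 2 * xH5 t) * deriv xH5 t * deriv (yH5 s) t
      + (12 * (xH5 t) ^ 3 - (xH5 t) ^ 2) * (deriv (yH5 s) t) ^ 2 = 0 :=
  hornH5_Fyy_coefficient_vanishes_general s hs t ht
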